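/- Let q ≥ 2 and n ≥ 1 be integers and let g ∈ F_q be a function that does not belong to 𝓔_q and is not the constant-one function 1_q. Then the subset Φ = F_q \ {g} is n-cell implementable under scenario (∗∗) if and only if q ≤ n + 1. -/

import Mathlib

/-- The alphabet 𝔹• = {0, 1, ∗, •}. -/
inductive BB : Type
  | zero
  | one
  | star
  | reject
deriving DecidableEq

instance instFintypeBB : Fintype BB :=
  ⟨{BB.zero, BB.one, BB.star, BB.reject}, fun x => by cases x <;> simp⟩

/-- The cell function T : 𝔹• × 𝔹• → 𝔹: T(u,ϑ) = 1 iff u = ∗, or ϑ = ∗,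
or u,ϑ ∈ 𝔹 with u = ϑ. -/
def Tcell : BB → BB → Bool
  | BB.star, _ => true
  | _, BB.star => true
  | BB.zero, BB.zero => true
  | BB.one, BB.one => true
  | _, _ => false

/-- The word-level function T(u,ϑ) = ⋀_{j<n} T(u_j, ϑ_j). -/
def Tword {n : ℕ} (u θ : Fin n → BB) : Bool :=
  decide (∀ j, Tcell (u j) (θ j) = true)

/-- The alphabet 𝔹 = {0,1} ⊆ 𝔹•. -/
def Bcirc : Set BB := {BB.zero, BB.one}

/-- The alphabet 𝔹∗ = {0,1,∗} ⊆ 𝔹•. -/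
def Bstar : Set BB := {BB.zero, BB.one, BB.star}

/-- The full alphabet 𝔹•. -/
def Bdot : Set BB := Set.univ

/-- A family Φ of functions {0,…,q−1} → 𝔹 is n-cell implementable under
scenario (A,B) if there are mappings u : {0,…,q−1} → A^n and ϑ : Φ → B^n
with f(x) = T(u(x), ϑ(f)) for all f ∈ Φ and x. -/
def Implementable (A B : Set BB) (n q : ℕ) (Φ : Set (Fin q → Bool)) : Prop :=
  ∃ u : Fin q → Fin n → BB, ∃ θ : (Fin q → Bool) → Fin n → BB,
    (∀ x j, u x j ∈ A) ∧ (∀ f ∈ Φ, ∀ j, θ f j ∈ B) ∧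
    (∀ f ∈ Φ, ∀ x, f x = Tword (u x) (θ f))

/-- The family 𝓔_q = { x ↦ [x = t] : t ∈ [q⟩ }. -/
def Eset (q : ℕ) : Set (Fin q → Bool) :=
  { f | ∃ t : Fin q, f = fun x => decide (x = t) }

/-- The family 𝓝_q = { x ↦ [x ≠ t] : t ∈ [q⟩ }. -/
def Nset (q : ℕ) : Set (Fin q → Bool) :=
  { f | ∃ t : Fin q, f = fun x => decide (x ≠ t) }

/-- The family 𝓖_q = { x ↦ [x ≥ t] : t ∈ [q⟩ }. -/
def Gset (q : ℕ) : Set (Fin q → Bool) :=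
  { f | ∃ t : Fin q, f = fun x => decide (t ≤ x) }

/-- The family 𝓛_q = { x ↦ [x ≤ t] : t ∈ [q⟩ }. -/
def Lset (q : ℕ) : Set (Fin q → Bool) :=
  { f | ∃ t : Fin q, f = fun x => decide (x ≤ t) }


/-! ### Auxiliary machinery -/

noncomputable section StarStarAux
open Classical


-- cyclic successor machinery on Fin r
def csucc {r : ℕ} (i : Fin r) : Fin r := ⟨(i.val + 1) % r, Nat.mod_lt _ i.pos⟩

lemma csucc_ne {r : ℕ} (hr : 2 ≤ r) (i : Fin r) : csucc i ≠ i := by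
  unfold csucc
  intro h
  have h' : (i.val + 1) % r = i.val := congrArg Fin.val h
  have hi : i.val < r := i.isLt
  rcases Nat.lt_or_ge (i.val + 1) r with h1 | h1
  · rw [Nat.mod_eq_of_lt h1] at h'; omega
  · have : i.val + 1 = r := by omega
    rw [this, Nat.mod_self] at h'; omega

lemma csucc_surj {r : ℕ} (j : Fin r) : ∃ i : Fin r, csucc i = j := by
  have hr : 0 < r := j.pos
  rcases Nat.eq_zero_or_pos j.val with h0 | hpos
  · refine ⟨⟨r - 1, by omega⟩, ?_⟩
    unfold csucc
    apply Fin.ext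
    simp only
    have : r - 1 + 1 = r := by omega
    rw [this, Nat.mod_self]; omega
  · refine ⟨⟨j.val - 1, by omega⟩, ?_⟩
    unfold csucc
    apply Fin.ext
    simp only
    have : j.val - 1 + 1 = j.val := by omega
    rw [this, Nat.mod_eq_of_lt j.isLt]

lemma csucc_trans {r : ℕ} (A : Set (Fin r)) (a : Fin r) (ha : a ∈ A) (b : Fin r) (hb : b ∉ A) :
    ∃ i : Fin r, i ∉ A ∧ csucc i ∈ A := by
  classical
  have hr : 0 < r := a.pos
  let step : ℕ → Fin r := fun k => ⟨(b.val + k) % r, Nat.mod_lt _ hr⟩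
  have hstep0 : step 0 = b := by
    apply Fin.ext; simp only [step, Nat.add_zero, Nat.mod_eq_of_lt b.isLt]
  have hreach : ∃ k, step k ∈ A := by
    rcases le_or_gt b.val a.val with h1 | h1
    · refine ⟨a.val - b.val, ?_⟩
      have hh : step (a.val - b.val) = a := by
        apply Fin.ext
        show (b.val + (a.val - b.val)) % r = a.val
        have hh2 : b.val + (a.val - b.val) = a.val := by omega
        rw [hh2, Nat.mod_eq_of_lt a.isLt]
      rw [hh]; exact ha
    · refine ⟨a.val + r - b.val, ?_⟩
      have hh : step (a.val + r - b.val) = a := by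
        apply Fin.ext
        show (b.val + (a.val + r - b.val)) % r = a.val
        have hh2 : b.val + (a.val + r - b.val) = a.val + r := by omega
        rw [hh2, Nat.add_mod_right, Nat.mod_eq_of_lt a.isLt]
      rw [hh]; exact ha
  have hk := Nat.find_spec hreach
  set k₁ := Nat.find hreach with hk₁
  have hk1pos : 0 < k₁ := by
    rcases Nat.eq_zero_or_pos k₁ with h0 | h; · rw [h0, hstep0] at hk; exact absurd hk hb
    exact h
  have hprev : step (k₁ - 1) ∉ A := by
    have := Nat.find_min hreach (m := k₁ - 1) (by omega)
    exact this
  refine ⟨step (k₁ - 1), hprev, ?_⟩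
  have heq : csucc (step (k₁ - 1)) = step k₁ := by
    apply Fin.ext
    simp only [csucc, step]
    rw [Nat.mod_add_mod]
    congr 1
    omega
  rw [heq]; exact hk

def Cfin {q : ℕ} (g : Fin q → Bool) : Finset (Fin q) :=
  Finset.univ.filter (fun x => g x = true)

lemma mem_Cfin {q : ℕ} (g : Fin q → Bool) (x : Fin q) : x ∈ Cfin g ↔ g x = true := by
  simp [Cfin]

def nxt {q : ℕ} (g : Fin q → Bool) (x : Fin q) : Fin q :=
  if h : x ∈ Cfin g then ((Cfin g).equivFin.symm (csucc ((Cfin g).equivFin ⟨x, h⟩))).val else x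

lemma nxt_mem {q : ℕ} (g : Fin q → Bool) (x : Fin q) (hx : g x = true) : g (nxt g x) = true := by
  have h : x ∈ Cfin g := (mem_Cfin g x).2 hx
  have : nxt g x = ((Cfin g).equivFin.symm (csucc ((Cfin g).equivFin ⟨x, h⟩))).val := by
    simp [nxt, h]
  rw [this]
  exact (mem_Cfin g _).1 ((Cfin g).equivFin.symm _).2

lemma nxt_ne {q : ℕ} (g : Fin q → Bool) (hcard : (Cfin g).card ≠ 1) (x : Fin q)
    (hx : g x = true) : nxt g x ≠ x := by
  have h : x ∈ Cfin g := (mem_Cfin g x).2 hx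
  have h1 : 1 ≤ (Cfin g).card := Finset.card_pos.2 ⟨x, h⟩
  have h2 : 2 ≤ (Cfin g).card := by omega
  have hdef : nxt g x = ((Cfin g).equivFin.symm (csucc ((Cfin g).equivFin ⟨x, h⟩))).val := by
    simp [nxt, h]
  rw [hdef]
  intro heq
  have : ((Cfin g).equivFin.symm (csucc ((Cfin g).equivFin ⟨x, h⟩))) = ⟨x, h⟩ :=
    Subtype.ext heq
  have := congrArg (Cfin g).equivFin this
  rw [Equiv.apply_symm_apply] at this
  exact csucc_ne h2 _ this

lemma nxt_surj {q : ℕ} (g : Fin q → Bool) (y : Fin q) (hy : g y = true) :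
    ∃ x, g x = true ∧ nxt g x = y := by
  have hmem : y ∈ Cfin g := (mem_Cfin g y).2 hy
  obtain ⟨i, hi⟩ := csucc_surj ((Cfin g).equivFin ⟨y, hmem⟩)
  refine ⟨((Cfin g).equivFin.symm i).val, (mem_Cfin g _).1 ((Cfin g).equivFin.symm i).2, ?_⟩
  have hx : ((Cfin g).equivFin.symm i).val ∈ Cfin g := ((Cfin g).equivFin.symm i).2
  have hdef : nxt g ((Cfin g).equivFin.symm i).val
      = ((Cfin g).equivFin.symm (csucc ((Cfin g).equivFin ⟨((Cfin g).equivFin.symm i).val, hx⟩))).val := by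
    simp [nxt, hx]
  rw [hdef]
  have : (⟨((Cfin g).equivFin.symm i).val, hx⟩ : {z // z ∈ Cfin g}) = (Cfin g).equivFin.symm i := by
    exact Subtype.ext rfl
  rw [this, Equiv.apply_symm_apply, hi, Equiv.symm_apply_apply]

lemma nxt_trans {q : ℕ} (g : Fin q → Bool) (W : Set (Fin q))
    (a : Fin q) (ha : g a = true) (haW : a ∈ W)
    (b : Fin q) (hb : g b = true) (hbW : b ∉ W) :
    ∃ x, g x = true ∧ x ∉ W ∧ nxt g x ∈ W := by
  have hma : a ∈ Cfin g := (mem_Cfin g a).2 ha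
  have hmb : b ∈ Cfin g := (mem_Cfin g b).2 hb
  set e := (Cfin g).equivFin with he
  obtain ⟨i, hiA, hsA⟩ := csucc_trans (A := {i | ((e.symm i : {z // z ∈ Cfin g}) : Fin q) ∈ W})
      (e ⟨a, hma⟩) (by simp [Equiv.symm_apply_apply]; exact haW)
      (e ⟨b, hmb⟩) (by simp [Equiv.symm_apply_apply]; exact hbW)
  refine ⟨(e.symm i).val, (mem_Cfin g _).1 (e.symm i).2, hiA, ?_⟩
  have hx : (e.symm i).val ∈ Cfin g := (e.symm i).2
  have hdef : nxt g (e.symm i).val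
      = (e.symm (csucc (e ⟨(e.symm i).val, hx⟩))).val := by
    simp [nxt, hx, he]
  rw [hdef]
  have h2 : (⟨(e.symm i).val, hx⟩ : {z // z ∈ Cfin g}) = e.symm i := Subtype.ext rfl
  rw [h2, Equiv.apply_symm_apply]
  exact hsA

def Rmem {q : ℕ} (g : Fin q → Bool) (z₀ : Fin q) (t x : Fin q) : Prop :=
  x = z₀ ∨ (g t = true ∧ x = nxt g t)

def Conf {q : ℕ} (g : Fin q → Bool) (z₀ : Fin q) (v : Fin q → BB) (x : Fin q) : Prop :=
  ∃ t, t ≠ z₀ ∧ ((x = t ∧ v t = BB.one) ∨ (Rmem g z₀ t x ∧ v t = BB.zero))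

lemma key {q : ℕ} (g : Fin q → Bool) (z₀ : Fin q) (hz₀ : g z₀ = false)
    (hcard : (Cfin g).card ≠ 1) (f : Fin q → Bool) (hf : f ≠ g) :
    ∃ v : Fin q → BB, (∀ t, v t ≠ BB.reject) ∧
      ∀ x, (f x = false ↔ Conf g z₀ v x) := by
  by_cases hfz : f z₀ = true
  · -- CASE 1
    refine ⟨fun t => if f t = false then BB.one else BB.star, ?_, ?_⟩
    · intro t; by_cases h : f t = false <;> simp [h]
    · intro x
      constructor
      · intro hx
        have hxz : x ≠ z₀ := by intro h; rw [h] at hx; rw [hfz] at hx; exact Bool.noConfusion hx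
        exact ⟨x, hxz, Or.inl ⟨rfl, by simp [hx]⟩⟩
      · rintro ⟨t, htz, ⟨hxt, hv⟩ | ⟨hR, hv⟩⟩
        · by_cases h : f t = false
          · rw [hxt]; exact h
          · simp [h] at hv
        · by_cases h : f t = false <;> simp [h] at hv
  · have hfz' : f z₀ = false := by
      cases h : f z₀ with
      | false => rfl
      | true => exact absurd h hfz
    by_cases hstar : ∃ t₀, g t₀ = false ∧ f t₀ = true
    · -- CASE 2
      obtain ⟨t₀, hgt₀, hft₀⟩ := hstar
      have ht₀z : t₀ ≠ z₀ := by
        intro h; rw [h, hfz'] at hft₀; exact Bool.noConfusion hft₀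
      refine ⟨fun t => if t = t₀ then BB.zero else if f t = false then BB.one else BB.star, ?_, ?_⟩
      · intro t
        by_cases h1 : t = t₀
        · simp [h1]
        · by_cases h2 : f t = false <;> simp [h1, h2]
      · intro x
        constructor
        · intro hx
          by_cases hxz : x = z₀
          · exact ⟨t₀, ht₀z, Or.inr ⟨Or.inl hxz, by simp⟩⟩
          · have hxt₀ : x ≠ t₀ := by
              intro h; rw [h, hft₀] at hx; exact Bool.noConfusion hx
            exact ⟨x, hxz, Or.inl ⟨rfl, by simp [hxt₀, hx]⟩⟩
        · rintro ⟨t, htz, ⟨hxt, hv⟩ | ⟨hR, hv⟩⟩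
          · by_cases h1 : t = t₀
            · simp [h1] at hv
            · by_cases h2 : f t = false
              · rw [hxt]; exact h2
              · simp [h1, h2] at hv
          · by_cases h1 : t = t₀
            · rcases hR with h | ⟨hg, _⟩
              · rw [h]; exact hfz'
              · rw [h1] at hg; rw [hgt₀] at hg; exact Bool.noConfusion hg
            · by_cases h2 : f t = false <;> simp [h1, h2] at hv
    · push_neg at hstar
      have hZW : ∀ t, g t = false → f t = false := by
        intro t hgt
        cases h : f t with
        | false => rfl
        | true => exact absurd h (hstar t hgt)
      by_cases hall : ∀ x, f x = false
      · -- CASE 3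
        obtain ⟨x₀, hx₀⟩ : ∃ x₀, f x₀ ≠ g x₀ := by
          by_contra h; push_neg at h; exact hf (funext h)
        have hga : g x₀ = true := by
          cases h : g x₀ with
          | true => rfl
          | false => exact absurd (by rw [h, hall x₀]) hx₀
        have hcard2 : (Cfin g).card ≠ 1 := hcard
        refine ⟨fun t => if g t = false then BB.one else BB.zero, ?_, ?_⟩
        · intro t; by_cases h : g t = false <;> simp [h]
        · intro x
          constructor
          · intro _
            by_cases hxz : x = z₀
            · have haz : x₀ ≠ z₀ := by
                intro h; rw [h, hz₀] at hga; exact Bool.noConfusion hga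
              exact ⟨x₀, haz, Or.inr ⟨Or.inl hxz, by simp [hga]⟩⟩
            · by_cases hgx : g x = false
              · exact ⟨x, hxz, Or.inl ⟨rfl, by simp [hgx]⟩⟩
              · have hgx' : g x = true := by
                  cases h : g x with
                  | true => rfl
                  | false => exact absurd h hgx
                obtain ⟨c, hc, hnc⟩ := nxt_surj g x hgx'
                have hcz : c ≠ z₀ := by
                  intro h; rw [h, hz₀] at hc; exact Bool.noConfusion hc
                refine ⟨c, hcz, Or.inr ⟨Or.inr ⟨hc, hnc.symm⟩, ?_⟩⟩
                simp [hc]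
          · intro _; exact hall x
      · -- CASE 4
        push_neg at hall
        obtain ⟨w, hw⟩ := hall
        have hfw : f w = true := by
          cases h : f w with
          | true => rfl
          | false => exact absurd h hw
        have hgw : g w = true := by
          cases h : g w with
          | true => rfl
          | false => rw [hZW w h] at hfw; exact Bool.noConfusion hfw
        obtain ⟨x₀, hx₀⟩ : ∃ x₀, f x₀ ≠ g x₀ := by
          by_contra h; push_neg at h; exact hf (funext h)
        have hga : g x₀ = true := by
          cases h : g x₀ with
          | true => rfl
          | false => exact absurd (by rw [hZW x₀ h, h]) hx₀
        have hfa : f x₀ = false := by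
          cases h : f x₀ with
          | false => rfl
          | true => exact absurd (by rw [h, hga]) hx₀
        obtain ⟨c, hgc, hcW, hncW⟩ := nxt_trans g {x | f x = false} x₀ hga hfa w hgw
          (by simp [Set.mem_setOf_eq, hfw])
        have hfc : f c = true := by
          cases h : f c with
          | true => rfl
          | false => exact absurd h hcW
        have hfnc : f (nxt g c) = false := hncW
        have hcz : c ≠ z₀ := by
          intro h; rw [h, hz₀] at hgc; exact Bool.noConfusion hgc
        refine ⟨fun t => if t = c then BB.zero else if f t = false then BB.one else BB.star, ?_, ?_⟩
        · intro t
          by_cases h1 : t = c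
          · simp [h1]
          · by_cases h2 : f t = false <;> simp [h1, h2]
        · intro x
          constructor
          · intro hx
            by_cases hxz : x = z₀
            · exact ⟨c, hcz, Or.inr ⟨Or.inl hxz, by simp⟩⟩
            · have hxc : x ≠ c := by
                intro h; rw [h, hfc] at hx; exact Bool.noConfusion hx
              exact ⟨x, hxz, Or.inl ⟨rfl, by simp [hxc, hx]⟩⟩
          · rintro ⟨t, htz, ⟨hxt, hv⟩ | ⟨hR, hv⟩⟩
            · by_cases h1 : t = c
              · simp [h1] at hv
              · by_cases h2 : f t = false
                · rw [hxt]; exact h2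
                · simp [h1, h2] at hv
            · by_cases h1 : t = c
              · rcases hR with h | ⟨_, hxn⟩
                · rw [h]; exact hfz'
                · rw [h1] at hxn; rw [hxn]; exact hfnc
              · by_cases h2 : f t = false <;> simp [h1, h2] at hv

-- cell index → element
def tOf (q n : ℕ) (z₀ : Fin q) (j : Fin n) : Fin q :=
  if h : (j : ℕ) + 1 < q then Equiv.swap z₀ ⟨0, by omega⟩ ⟨(j : ℕ) + 1, h⟩ else z₀

lemma tOf_surj {q n : ℕ} (hqn : q ≤ n + 1) (z₀ : Fin q) (t : Fin q) (ht : t ≠ z₀) :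
    ∃ j : Fin n, tOf q n z₀ j = t := by
  have hq : 0 < q := t.pos
  obtain ⟨iv, hivlt, hivEq⟩ : ∃ iv, ∃ h : iv < q, (⟨iv, h⟩ : Fin q) = Equiv.swap z₀ ⟨0, hq⟩ t :=
    ⟨(Equiv.swap z₀ ⟨0, hq⟩ t).val, (Equiv.swap z₀ ⟨0, hq⟩ t).isLt, Fin.ext rfl⟩
  have hine : (Equiv.swap z₀ ⟨0, hq⟩ t) ≠ ⟨0, hq⟩ := by
    intro h
    apply ht
    have h2 := congrArg (Equiv.swap z₀ ⟨0, hq⟩) h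
    rw [Equiv.swap_apply_self, Equiv.swap_apply_right] at h2
    exact h2
  have hival : 1 ≤ iv := by
    by_contra hcon
    apply hine
    rw [← hivEq]
    exact Fin.ext (show iv = 0 by omega)
  have hjlt : iv - 1 < n := by omega
  refine ⟨⟨iv - 1, hjlt⟩, ?_⟩
  unfold tOf
  have hcond : (iv - 1 : ℕ) + 1 < q := by omega
  rw [dif_pos hcond]
  have heq : (⟨(iv - 1 : ℕ) + 1, hcond⟩ : Fin q) = Equiv.swap z₀ ⟨0, hq⟩ t := by
    rw [← hivEq]
    exact Fin.ext (show iv - 1 + 1 = iv by omega)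
  rw [heq]
  exact Equiv.swap_apply_self _ _ _

def uMat (q n : ℕ) (g : Fin q → Bool) (z₀ : Fin q) : Fin q → Fin n → BB := fun x j =>
  if tOf q n z₀ j = z₀ then BB.star
  else if x = tOf q n z₀ j then BB.zero
  else if Rmem g z₀ (tOf q n z₀ j) x then BB.one
  else BB.star

def thOf (q n : ℕ) (g : Fin q → Bool) (z₀ : Fin q) (hz₀ : g z₀ = false)
    (hcard : (Cfin g).card ≠ 1) : (Fin q → Bool) → Fin n → BB := fun f j =>
  if hf : f = g then BB.star
  else Classical.choose (key g z₀ hz₀ hcard f hf) (tOf q n z₀ j)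

lemma Tcell_false_iff (a b : BB) (ha : a ≠ BB.reject) (hb : b ≠ BB.reject) :
    Tcell a b = false ↔ ((a = BB.zero ∧ b = BB.one) ∨ (a = BB.one ∧ b = BB.zero)) := by
  cases a <;> cases b <;> simp_all [Tcell]

lemma mem_Bstar_of_ne_reject (a : BB) (ha : a ≠ BB.reject) : a ∈ Bstar := by
  cases a <;> simp_all [Bstar]

lemma backward {q n : ℕ} (hq : 2 ≤ q) (hqn : q ≤ n + 1) (g : Fin q → Bool)
    (hgE : g ∉ Eset q) (hg1 : g ≠ fun _ => true) :
    Implementable Bstar Bstar n q ({g}ᶜ) := by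
  classical
  obtain ⟨z₀, hz₀⟩ : ∃ z, g z = false := by
    by_contra h
    push_neg at h
    apply hg1
    funext x
    cases hgx : g x with
    | true => rfl
    | false => exact absurd hgx (h x)
  have hcard : (Cfin g).card ≠ 1 := by
    intro h1
    obtain ⟨t, ht⟩ := Finset.card_eq_one.1 h1
    apply hgE
    refine ⟨t, ?_⟩
    funext x
    have hx : g x = true ↔ x = t := by
      rw [← mem_Cfin, ht]; simp
    by_cases h : x = t
    · have hgx : g x = true := hx.2 h
      rw [hgx]
      simp [h]
    · have : g x ≠ true := fun hgx => h (hx.1 hgx)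
      have hgx : g x = false := by
        cases hgg : g x with
        | false => rfl
        | true => exact absurd hgg this
      simp [h, hgx]
  refine ⟨uMat q n g z₀, thOf q n g z₀ hz₀ hcard, ?_, ?_, ?_⟩
  · -- u values in Bstar
    intro x j
    unfold uMat
    by_cases h1 : tOf q n z₀ j = z₀
    · simp [h1, Bstar]
    · by_cases h2 : x = tOf q n z₀ j
      · simp [h1, h2, Bstar]
      · by_cases h3 : Rmem g z₀ (tOf q n z₀ j) x <;> simp [h1, h2, h3, Bstar]
  · -- θ values in Bstar
    intro f hf j
    have hfne : f ≠ g := by simpa using hf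
    unfold thOf
    rw [dif_neg hfne]
    obtain ⟨hnr, _⟩ := Classical.choose_spec (key g z₀ hz₀ hcard f hfne)
    exact mem_Bstar_of_ne_reject _ (hnr _)
  · -- correctness
    intro f hf x
    have hfne : f ≠ g := by simpa using hf
    obtain ⟨hnr, hiff⟩ := Classical.choose_spec (key g z₀ hz₀ hcard f hfne)
    set v := Classical.choose (key g z₀ hz₀ hcard f hfne) with hv
    have hth : ∀ j, thOf q n g z₀ hz₀ hcard f j = v (tOf q n z₀ j) := by
      intro j; unfold thOf; rw [dif_neg hfne]
    by_cases hfx : f x = true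
    · rw [hfx]
      symm
      unfold Tword
      rw [decide_eq_true_iff]
      intro j
      rw [hth j]
      set t := tOf q n z₀ j with htj
      by_cases h1 : t = z₀
      · have : uMat q n g z₀ x j = BB.star := by unfold uMat; rw [← htj, if_pos h1]
        rw [this]; cases v t <;> rfl
      · by_contra hcell
        have hcf : Tcell (uMat q n g z₀ x j) (v t) = false := by
          cases hc : Tcell (uMat q n g z₀ x j) (v t) with
          | false => rfl
          | true => exact absurd hc hcell
        have hunr : uMat q n g z₀ x j ≠ BB.reject := by
          unfold uMat
          rw [← htj, if_neg h1]
          by_cases h2 : x = t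
          · simp [h2]
          · by_cases h3 : Rmem g z₀ t x <;> simp [h2, h3]
        have := (Tcell_false_iff _ _ hunr (hnr t)).1 hcf
        have hConf : Conf g z₀ v x := by
          rcases this with ⟨hu0, hv1⟩ | ⟨hu1, hv0⟩
          · -- u = zero: x = t
            have hxt : x = t := by
              by_contra hxt
              unfold uMat at hu0
              rw [← htj, if_neg h1, if_neg hxt] at hu0
              by_cases h3 : Rmem g z₀ t x
              · rw [if_pos h3] at hu0; exact BB.noConfusion hu0
              · rw [if_neg h3] at hu0; exact BB.noConfusion hu0
            exact ⟨t, h1, Or.inl ⟨hxt, hv1⟩⟩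
          · -- u = one: Rmem
            have hR : Rmem g z₀ t x := by
              by_contra hR
              unfold uMat at hu1
              rw [← htj, if_neg h1] at hu1
              by_cases h2 : x = t
              · rw [if_pos h2] at hu1; exact BB.noConfusion hu1
              · rw [if_neg h2, if_neg hR] at hu1; exact BB.noConfusion hu1
            exact ⟨t, h1, Or.inr ⟨hR, hv0⟩⟩
        have := (hiff x).2 hConf
        rw [hfx] at this
        exact Bool.noConfusion this
    · have hfx' : f x = false := by
        cases hc : f x with
        | false => rfl
        | true => exact absurd hc hfx
      rw [hfx']
      symm
      unfold Tword
      rw [decide_eq_false_iff_not]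
      intro hall
      obtain ⟨t, htz, hconf⟩ := (hiff x).1 hfx'
      obtain ⟨j, hj⟩ := tOf_surj hqn z₀ t htz
      have := hall j
      rw [hth j, hj] at this
      rcases hconf with ⟨hxt, hv1⟩ | ⟨hR, hv0⟩
      · have hu : uMat q n g z₀ x j = BB.zero := by
          unfold uMat; rw [hj, if_neg htz, if_pos hxt]
        rw [hu, hv1] at this
        exact Bool.noConfusion this
      · have hxt : x ≠ t := by
          intro hxt
          rcases hR with h | ⟨hgt, hxn⟩
          · rw [hxt] at h; exact htz h
          · rw [hxt] at hxn
            exact nxt_ne g hcard t hgt hxn.symm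
        have hu : uMat q n g z₀ x j = BB.one := by
          unfold uMat; rw [hj, if_neg htz, if_neg hxt, if_pos hR]
        rw [hu, hv0] at this
        exact Bool.noConfusion this

def optSide {α ι : Type} (a b : ι → Set α) (i : ι) : Option Bool → Set α
  | some true => a i
  | some false => b i
  | none => ∅

def uni {α ι : Type} (F : Finset ι) (a b : ι → Set α) (θ : ι → Option Bool) : Set α :=
  {z | ∃ i ∈ F, z ∈ optSide a b i (θ i)}

lemma optSide_cases {α ι : Type} (a b : ι → Set α) (i : ι) (o : Option Bool) :
    optSide a b i o = a i ∨ optSide a b i o = b i ∨ optSide a b i o = (∅ : Set α) := by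
  match o with
  | some true => exact Or.inl rfl
  | some false => exact Or.inr (Or.inl rfl)
  | none => exact Or.inr (Or.inr rfl)

lemma side_subset_uni {α ι : Type} {F : Finset ι} {a b : ι → Set α} {θ : ι → Option Bool}
    {i : ι} (hi : i ∈ F) : optSide a b i (θ i) ⊆ uni F a b θ :=
  fun z hz => ⟨i, hi, hz⟩

lemma optSide_map {α β ι : Type} (T : Set α → Set β) (hT : T ∅ = ∅)
    (a b : ι → Set α) (i : ι) (o : Option Bool) :
    optSide (fun j => T (a j)) (fun j => T (b j)) i o = T (optSide a b i o) := by
  match o with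
  | some true => rfl
  | some false => rfl
  | none => exact hT.symm

theorem star : ∀ (m : ℕ) (α : Type) [Fintype α] [DecidableEq α]
    (ι : Type) [DecidableEq ι] (F : Finset ι) (a b : ι → Set α),
    (∀ i ∈ F, a i ∩ b i = ∅) →
    (∀ W : Set α, ∃ θ : ι → Option Bool, uni F a b θ = W) →
    Fintype.card α = m → m ≤ F.card := by
  intro m
  induction m using Nat.strong_induction_on with
  | _ m ih =>
    intro α _ _ ι _ F a b hdisj hfull hcard
    have hsing : ∀ v : α, ∃ i ∈ F, a i = {v} ∨ b i = {v} := by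
      intro v
      obtain ⟨θ, hθ⟩ := hfull {v}
      have hv : v ∈ uni F a b θ := by rw [hθ]; exact rfl
      obtain ⟨i, hiF, hvi⟩ := hv
      have hsub : optSide a b i (θ i) ⊆ {v} := by
        rw [← hθ] at *; exact side_subset_uni hiF
      have heq : optSide a b i (θ i) = {v} := by
        apply Set.Subset.antisymm hsub
        intro z hz
        rcases hz with rfl
        exact hvi
      rcases optSide_cases a b i (θ i) with h | h | h
      · exact ⟨i, hiF, Or.inl (h ▸ heq)⟩
      · exact ⟨i, hiF, Or.inr (h ▸ heq)⟩
      · rw [h] at heq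
        exact absurd heq.symm (by simp)
    let κ : α → ι := fun v => Classical.choose (hsing v)
    have hκF : ∀ v, κ v ∈ F := fun v => (Classical.choose_spec (hsing v)).1
    have hκs : ∀ v, a (κ v) = {v} ∨ b (κ v) = {v} :=
      fun v => (Classical.choose_spec (hsing v)).2
    by_cases hinj : Function.Injective κ
    · have h1 : (Finset.univ : Finset α).card ≤ F.card := by
        apply Finset.card_le_card_of_injOn κ
        · intro v _; exact hκF v
        · intro v _ w _ h; exact hinj h
      rwa [Finset.card_univ, hcard] at h1
    · rw [Function.not_injective_iff] at hinj
      obtain ⟨x, y, hκxy, hxy⟩ := hinj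
      obtain ⟨p, r, hpr, haD, hbD⟩ :
          ∃ p r : α, p ≠ r ∧ a (κ x) = {p} ∧ b (κ x) = {r} := by
        have hx := hκs x
        have hy := hκs y
        rw [← hκxy] at hy
        rcases hx with hax | hbx
        · rcases hy with hay | hby
          · exfalso; apply hxy
            have h2 : ({x} : Set α) = {y} := by rw [← hax, hay]
            simpa using h2
          · exact ⟨x, y, hxy, hax, hby⟩
        · rcases hy with hay | hby
          · exact ⟨y, x, fun h => hxy h.symm, hay, hbx⟩
          · exfalso; apply hxy
            have h2 : ({x} : Set α) = {y} := by rw [← hbx, hby]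
            simpa using h2
      set D := κ x with hD
      have hDF : D ∈ F := hκF x
      have hm2 : 2 ≤ m := by
        rw [← hcard]
        exact Fintype.one_lt_card_iff_nontrivial.2 ⟨⟨p, r, hpr⟩⟩
      by_cases hdirty : ∃ c ∈ F, c ≠ D ∧ (a c ∩ {p, r} : Set α) ≠ ∅ ∧ (b c ∩ {p, r} : Set α) ≠ ∅
      · -- CLEAN CASE
        obtain ⟨c₀, hc₀F, hc₀D, hac₀, hbc₀⟩ := hdirty
        set F' := (F.erase D).erase c₀ with hF'
        have hF'sub : ∀ i ∈ F', i ∈ F :=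
          fun i hi => Finset.mem_of_mem_erase (Finset.mem_of_mem_erase hi)
        have key : ∀ (W : Set α), W ∩ {p, r} = ∅ →
            ∃ θ : ι → Option Bool, uni F' a b θ = W := by
          intro W hW
          obtain ⟨θ, hθ⟩ := hfull W
          refine ⟨θ, ?_⟩
          apply Set.Subset.antisymm
          · rintro z ⟨i, hiF, hzi⟩
            rw [← hθ]
            exact ⟨i, hF'sub i hiF, hzi⟩
          · intro z hz
            rw [← hθ] at hz
            obtain ⟨i, hiF, hzi⟩ := hz
            have hside : optSide a b i (θ i) ⊆ W := by
              rw [← hθ]; exact side_subset_uni hiF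
            have hiD : i ≠ D := by
              intro hiDeq
              rw [hiDeq] at hzi hside
              rcases optSide_cases a b D (θ D) with h | h | h
              · rw [h, haD] at hside
                have hp : p ∈ W ∩ {p, r} := ⟨hside rfl, by simp⟩
                rw [hW] at hp; exact hp
              · rw [h, hbD] at hside
                have hp : r ∈ W ∩ {p, r} := ⟨hside rfl, by simp⟩
                rw [hW] at hp; exact hp
              · rw [h] at hzi; exact hzi
            have hic₀ : i ≠ c₀ := by
              intro hic₀eq
              rw [hic₀eq] at hzi hside
              rcases optSide_cases a b c₀ (θ c₀) with h | h | h
              · obtain ⟨w, hw⟩ := Set.nonempty_iff_ne_empty.2 hac₀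
                have hww : w ∈ W ∩ {p, r} := ⟨hside (h ▸ hw.1), hw.2⟩
                rw [hW] at hww; exact hww
              · obtain ⟨w, hw⟩ := Set.nonempty_iff_ne_empty.2 hbc₀
                have hww : w ∈ W ∩ {p, r} := ⟨hside (h ▸ hw.1), hw.2⟩
                rw [hW] at hww; exact hww
              · rw [h] at hzi; exact hzi
            exact ⟨i, Finset.mem_erase.2 ⟨hic₀, Finset.mem_erase.2 ⟨hiD, hiF⟩⟩, hzi⟩
        -- new ground
        have hcard' : Fintype.card {z : α // z ≠ p ∧ z ≠ r} = m - 2 := by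
          have h1 : Fintype.card {z : α // z ≠ p ∧ z ≠ r}
              = (Finset.univ.filter (fun z : α => z ≠ p ∧ z ≠ r)).card :=
            Fintype.card_subtype _
          have h2 : Finset.univ.filter (fun z : α => z ≠ p ∧ z ≠ r)
              = (Finset.univ.erase p).erase r := by
            ext z
            simp only [Finset.mem_filter, Finset.mem_univ, true_and, Finset.mem_erase]
            tauto
          rw [h1, h2,
            Finset.card_erase_of_mem (Finset.mem_erase.2 ⟨fun h => hpr h.symm, Finset.mem_univ r⟩),
            Finset.card_erase_of_mem (Finset.mem_univ p), Finset.card_univ, hcard]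
          omega
        set T : Set α → Set {z : α // z ≠ p ∧ z ≠ r} := fun s => Subtype.val ⁻¹' s with hT
        have hT0 : T ∅ = ∅ := rfl
        have hdisj' : ∀ i ∈ F', (fun j => T (a j)) i ∩ (fun j => T (b j)) i = ∅ := by
          intro i hi
          ext z
          simp only [Set.mem_inter_iff, Set.mem_preimage, Set.mem_empty_iff_false, iff_false]
          rintro ⟨h1, h2⟩
          have h3 : z.val ∈ a i ∩ b i := ⟨h1, h2⟩
          rw [hdisj i (hF'sub i hi)] at h3
          exact h3
        have hfull' : ∀ W'' : Set {z : α // z ≠ p ∧ z ≠ r},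
            ∃ θ, uni F' (fun j => T (a j)) (fun j => T (b j)) θ = W'' := by
          intro W''
          have hWpr : (Subtype.val '' W'') ∩ {p, r} = ∅ := by
            ext z
            simp only [Set.mem_inter_iff, Set.mem_empty_iff_false, iff_false]
            rintro ⟨⟨z'', hz'', rfl⟩, hz2⟩
            rcases hz2 with h | h
            · exact z''.2.1 h
            · exact z''.2.2 h
          obtain ⟨θ, hθ⟩ := key (Subtype.val '' W'') hWpr
          refine ⟨θ, ?_⟩
          apply Set.Subset.antisymm
          · rintro z ⟨i, hiF, hzi⟩
            rw [optSide_map T hT0] at hzi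
            have : z.val ∈ Subtype.val '' W'' := by
              rw [← hθ]; exact ⟨i, hiF, hzi⟩
            obtain ⟨w'', hw'', hww⟩ := this
            have : w'' = z := Subtype.ext hww
            rwa [← this]
          · intro z hz
            have hzv : z.val ∈ Subtype.val '' W'' := ⟨z, hz, rfl⟩
            rw [← hθ] at hzv
            obtain ⟨i, hiF, hzi⟩ := hzv
            exact ⟨i, hiF, by rw [optSide_map T hT0]; exact hzi⟩
        have hrec := ih (m - 2) (by omega) {z : α // z ≠ p ∧ z ≠ r} ι F'
          (fun j => T (a j)) (fun j => T (b j)) hdisj' hfull' hcard'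
        have hD' : D ∈ F.erase c₀ := Finset.mem_erase.2 ⟨fun h => hc₀D h.symm, hDF⟩
        have hcF' : F'.card = F.card - 2 := by
          rw [hF']
          rw [Finset.erase_right_comm]
          rw [Finset.card_erase_of_mem hD']
          rw [Finset.card_erase_of_mem hc₀F]
          omega
        have hc₀' : c₀ ∈ F.erase D := Finset.mem_erase.2 ⟨hc₀D, hc₀F⟩
        have hF2a : 1 ≤ (F.erase D).card := Finset.card_pos.2 ⟨c₀, hc₀'⟩
        have hF2b : (F.erase D).card = F.card - 1 := Finset.card_erase_of_mem hDF
        omega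
      · -- MERGE CASE
        push_neg at hdirty
        have hclean : ∀ c ∈ F, c ≠ D → (a c ∩ {p, r} : Set α) = ∅ ∨ (b c ∩ {p, r} : Set α) = ∅ := by
          intro c hc hcD
          by_cases h : (a c ∩ {p, r} : Set α) = ∅
          · exact Or.inl h
          · exact Or.inr (hdirty c hc hcD (Set.nonempty_iff_ne_empty.2 h))
        -- no cell besides D has p,r in opposite sides
        have hnop : ∀ c ∈ F, c ≠ D → ¬((p ∈ a c ∧ r ∈ b c) ∨ (r ∈ a c ∧ p ∈ b c)) := by
          intro c hc hcD hcon
          rcases hclean c hc hcD with h | h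
          · rcases hcon with ⟨h1, _⟩ | ⟨h1, _⟩
            · have : p ∈ (a c ∩ {p, r} : Set α) := ⟨h1, by simp⟩
              rw [h] at this; exact this
            · have : r ∈ (a c ∩ {p, r} : Set α) := ⟨h1, by simp⟩
              rw [h] at this; exact this
          · rcases hcon with ⟨_, h2⟩ | ⟨_, h2⟩
            · have : r ∈ (b c ∩ {p, r} : Set α) := ⟨h2, by simp⟩
              rw [h] at this; exact this
            · have : p ∈ (b c ∩ {p, r} : Set α) := ⟨h2, by simp⟩
              rw [h] at this; exact this
        -- merged ground: remove p, mapping p ↦ r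
        set T : Set α → Set {z : α // z ≠ p} :=
          fun s => {z : {z : α // z ≠ p} | z.val ∈ s ∨ (z.val = r ∧ p ∈ s)} with hT
        have hT0 : T ∅ = ∅ := by
          rw [hT]; ext z; simp
        set F' := F.erase D with hF'
        have hF'sub : ∀ i ∈ F', i ∈ F := fun i hi => Finset.mem_of_mem_erase hi
        have hcard' : Fintype.card {z : α // z ≠ p} = m - 1 := by
          have h1 : Fintype.card {z : α // z ≠ p}
              = (Finset.univ.filter (fun z : α => z ≠ p)).card := Fintype.card_subtype _
          have h2 : Finset.univ.filter (fun z : α => z ≠ p) = Finset.univ.erase p := by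
            ext z
            simp [Finset.mem_erase]
          rw [h1, h2, Finset.card_erase_of_mem (Finset.mem_univ p), Finset.card_univ, hcard]
        have hdisj' : ∀ i ∈ F', (fun j => T (a j)) i ∩ (fun j => T (b j)) i = ∅ := by
          intro i hi
          ext z
          simp only [Set.mem_inter_iff, Set.mem_empty_iff_false, iff_false, hT, Set.mem_setOf_eq]
          rintro ⟨h1 | ⟨hzr, h1⟩, h2 | ⟨hzr2, h2⟩⟩
          · have h3 : z.val ∈ a i ∩ b i := ⟨h1, h2⟩
            rw [hdisj i (hF'sub i hi)] at h3; exact h3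
          · -- z.val ∈ a i, z.val = r, p ∈ b i : opposite spanning
            exact hnop i (hF'sub i hi) (Finset.ne_of_mem_erase hi)
              (Or.inr ⟨hzr2 ▸ h1, h2⟩)
          · exact hnop i (hF'sub i hi) (Finset.ne_of_mem_erase hi)
              (Or.inl ⟨h1, hzr ▸ h2⟩)
          · have h3 : p ∈ a i ∩ b i := ⟨h1, h2⟩
            rw [hdisj i (hF'sub i hi)] at h3; exact h3
        have hfull' : ∀ W'' : Set {z : α // z ≠ p},
            ∃ θ, uni F' (fun j => T (a j)) (fun j => T (b j)) θ = W'' := by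
          intro W''
          by_cases hyW : (⟨r, fun h => hpr h.symm⟩ : {z : α // z ≠ p}) ∈ W''
          · -- r-in case: W includes p
            obtain ⟨θ, hθ⟩ := hfull ((Subtype.val '' W'') ∪ {p})
            refine ⟨θ, ?_⟩
            apply Set.Subset.antisymm
            · rintro z ⟨i, hiF, hzi⟩
              rw [optSide_map T hT0] at hzi
              have hside : optSide a b i (θ i) ⊆ (Subtype.val '' W'') ∪ {p} := by
                rw [← hθ]; exact side_subset_uni (hF'sub i hiF)
              rcases hzi with h1 | ⟨hzr, h1⟩
              · have := hside h1
                rcases this with ⟨w'', hw'', hww⟩ | h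
                · rwa [← Subtype.ext hww]
                · exact absurd h z.2
              · have heq : z = (⟨r, fun h => hpr h.symm⟩ : {z : α // z ≠ p}) := Subtype.ext hzr
                rw [heq]; exact hyW
            · intro z hz
              by_cases hzr : z.val = r
              · -- need a cell ≠ D whose chosen side meets {p, r}
                have hc : ∃ i ∈ F, i ≠ D ∧ (p ∈ optSide a b i (θ i) ∨ r ∈ optSide a b i (θ i)) := by
                  by_contra hno
                  push_neg at hno
                  have hpW : p ∈ uni F a b θ := by
                    rw [hθ]; exact Or.inr rfl
                  have hrW : r ∈ uni F a b θ := by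
                    rw [hθ]
                    exact Or.inl ⟨⟨r, fun h => hpr h.symm⟩, hyW, rfl⟩
                  obtain ⟨ip, hipF, hpi⟩ := hpW
                  obtain ⟨ir, hirF, hri⟩ := hrW
                  have hipD : ip = D := by
                    by_contra h
                    exact (hno ip hipF h).1 hpi
                  have hirD : ir = D := by
                    by_contra h
                    exact (hno ir hirF h).2 hri
                  rw [hipD] at hpi
                  rw [hirD] at hri
                  rcases optSide_cases a b D (θ D) with h | h | h
                  · rw [h, haD] at hpi hri
                    have : r = p := hri
                    exact hpr this.symm
                  · rw [h, hbD] at hpi hri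
                    have : p = r := hpi
                    exact hpr this
                  · rw [h] at hpi; exact hpi
                obtain ⟨i, hiF, hiD, hpr'⟩ := hc
                refine ⟨i, Finset.mem_erase.2 ⟨hiD, hiF⟩, ?_⟩
                rw [optSide_map T hT0]
                rcases hpr' with h | h
                · exact Or.inr ⟨hzr, h⟩
                · exact Or.inl (hzr ▸ h)
              · -- z.val ≠ r (and ≠ p): ordinary coverage
                have hzW : z.val ∈ (Subtype.val '' W'') ∪ {p} := Or.inl ⟨z, hz, rfl⟩
                rw [← hθ] at hzW
                obtain ⟨i, hiF, hzi⟩ := hzW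
                have hiD : i ≠ D := by
                  intro hiDeq
                  rw [hiDeq] at hzi
                  rcases optSide_cases a b D (θ D) with h | h | h
                  · rw [h, haD] at hzi; exact z.2 hzi
                  · rw [h, hbD] at hzi; exact hzr hzi
                  · rw [h] at hzi; exact hzi
                refine ⟨i, Finset.mem_erase.2 ⟨hiD, hiF⟩, ?_⟩
                rw [optSide_map T hT0]
                exact Or.inl hzi
          · -- r-not-in case
            obtain ⟨θ, hθ⟩ := hfull (Subtype.val '' W'')
            have hpW : p ∉ (Subtype.val '' W'') := by
              rintro ⟨w'', _, hww⟩
              exact w''.2 hww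
            have hrW : r ∉ (Subtype.val '' W'') := by
              rintro ⟨w'', hw'', hww⟩
              apply hyW
              have : w'' = (⟨r, fun h => hpr h.symm⟩ : {z : α // z ≠ p}) := Subtype.ext hww
              rwa [this] at hw''
            refine ⟨θ, ?_⟩
            apply Set.Subset.antisymm
            · rintro z ⟨i, hiF, hzi⟩
              rw [optSide_map T hT0] at hzi
              have hside : optSide a b i (θ i) ⊆ Subtype.val '' W'' := by
                rw [← hθ]; exact side_subset_uni (hF'sub i hiF)
              rcases hzi with h1 | ⟨hzr, h1⟩
              · obtain ⟨w'', hw'', hww⟩ := hside h1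
                rwa [← Subtype.ext hww]
              · exact absurd (hside h1) hpW
            · intro z hz
              have hzW : z.val ∈ Subtype.val '' W'' := ⟨z, hz, rfl⟩
              rw [← hθ] at hzW
              obtain ⟨i, hiF, hzi⟩ := hzW
              have hiD : i ≠ D := by
                intro hiDeq
                rw [hiDeq] at hzi
                rcases optSide_cases a b D (θ D) with h | h | h
                · rw [h, haD] at hzi
                  exact z.2 (Set.mem_singleton_iff.1 hzi)
                · rw [h, hbD] at hzi
                  apply hyW
                  have hzr2 : z = (⟨r, fun hh => hpr hh.symm⟩ : {z : α // z ≠ p}) :=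
                    Subtype.ext (Set.mem_singleton_iff.1 hzi)
                  rwa [hzr2] at hz
                · rw [h] at hzi; exact hzi
              refine ⟨i, Finset.mem_erase.2 ⟨hiD, hiF⟩, ?_⟩
              rw [optSide_map T hT0]
              exact Or.inl hzi
        have hrec := ih (m - 1) (by omega) {z : α // z ≠ p} ι F'
          (fun j => T (a j)) (fun j => T (b j)) hdisj' hfull' hcard'
        have hcF' : F'.card = F.card - 1 := Finset.card_erase_of_mem hDF
        have hF1 : 1 ≤ F.card := Finset.card_pos.2 ⟨D, hDF⟩
        omega


lemma ne_reject_of_mem_Bstar {a : BB} (h : a ∈ Bstar) : a ≠ BB.reject := by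
  rcases h with h | h | h <;> (subst h; intro hc; exact BB.noConfusion hc)

lemma forward {q n : ℕ} (hq : 2 ≤ q) (g : Fin q → Bool)
    (himpl : Implementable Bstar Bstar n q ({g}ᶜ)) : q ≤ n + 1 := by
  by_contra hcon
  push_neg at hcon
  obtain ⟨u, θ, hu, hθ, hcorr⟩ := himpl
  have hq0 : 0 < q := by omega
  set x₀ : Fin q := ⟨0, hq0⟩ with hx₀
  set a : Fin n → Set {z : Fin q // z ≠ x₀} := fun i => {z | u z.val i = BB.zero} with ha
  set b : Fin n → Set {z : Fin q // z ≠ x₀} := fun i => {z | u z.val i = BB.one} with hb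
  have hdisj : ∀ i ∈ (Finset.univ : Finset (Fin n)), a i ∩ b i = ∅ := by
    intro i _
    ext z
    simp only [ha, hb, Set.mem_inter_iff, Set.mem_setOf_eq, Set.mem_empty_iff_false, iff_false]
    rintro ⟨h1, h2⟩
    rw [h1] at h2
    exact BB.noConfusion h2
  have hfull : ∀ W'' : Set {z : Fin q // z ≠ x₀},
      ∃ θ'' : Fin n → Option Bool, uni Finset.univ a b θ'' = W'' := by
    intro W''
    set W' : Set (Fin q) := Subtype.val '' W'' with hW'
    have hx₀W' : x₀ ∉ W' := by
      rintro ⟨w, _, hw⟩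
      exact w.2 hw
    -- two candidate functions whose zero sets restrict to W' off x₀
    obtain ⟨f, hfg, hfzero⟩ : ∃ f : Fin q → Bool, f ≠ g ∧
        ∀ z : Fin q, z ≠ x₀ → (f z = false ↔ z ∈ W') := by
      by_cases hg : (fun z => decide (z ∉ W')) = g
      · refine ⟨fun z => decide (¬(z ∈ W' ∨ z = x₀)), ?_, ?_⟩
        · intro h
          rw [← hg] at h
          have := congrFun h x₀
          simp [hx₀W'] at this
        · intro z hz
          simp [hz]
      · refine ⟨fun z => decide (z ∉ W'), hg, ?_⟩
        intro z _
        simp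
    have hfmem : f ∈ ({g}ᶜ : Set (Fin q → Bool)) := by simpa using hfg
    have hconfiff : ∀ x : Fin q, (f x = false ↔
        ∃ i, (u x i = BB.zero ∧ θ f i = BB.one) ∨ (u x i = BB.one ∧ θ f i = BB.zero)) := by
      intro x
      have hcw := hcorr f hfmem x
      constructor
      · intro hfx
        rw [hfx] at hcw
        have : ¬(∀ j, Tcell (u x j) (θ f j) = true) := by
          intro hall
          have : Tword (u x) (θ f) = true := by
            unfold Tword; rw [decide_eq_true_iff]; exact hall
          rw [← hcw] at this
          exact Bool.noConfusion this
        push_neg at this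
        obtain ⟨j, hj⟩ := this
        have hjf : Tcell (u x j) (θ f j) = false := by
          cases hc : Tcell (u x j) (θ f j) with
          | false => rfl
          | true => exact absurd hc hj
        exact ⟨j, (Tcell_false_iff _ _ (ne_reject_of_mem_Bstar (hu x j))
          (ne_reject_of_mem_Bstar (hθ f hfmem j))).1 hjf⟩
      · rintro ⟨i, hi⟩
        have hjf : Tcell (u x i) (θ f i) = false := by
          rcases hi with ⟨h1, h2⟩ | ⟨h1, h2⟩ <;> rw [h1, h2] <;> rfl
        cases hfx : f x with
        | false => rfl
        | true =>
          rw [hfx] at hcw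
          have : ∀ j, Tcell (u x j) (θ f j) = true := by
            have h2 : Tword (u x) (θ f) = true := hcw.symm
            unfold Tword at h2
            rwa [decide_eq_true_iff] at h2
          rw [this i] at hjf
          exact Bool.noConfusion hjf
    set θs : Fin n → Option Bool := fun i => if θ f i = BB.one then some true
      else if θ f i = BB.zero then some false else none with hθsdef
    have hθsi : ∀ i, θs i = if θ f i = BB.one then some true
        else if θ f i = BB.zero then some false else none := fun i => rfl
    refine ⟨θs, ?_⟩
    apply Set.Subset.antisymm
    · rintro z ⟨i, _, hzi⟩
      rw [hθsi i] at hzi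
      have hconf : (u z.val i = BB.zero ∧ θ f i = BB.one) ∨
          (u z.val i = BB.one ∧ θ f i = BB.zero) := by
        by_cases h1 : θ f i = BB.one
        · rw [if_pos h1] at hzi
          exact Or.inl ⟨hzi, h1⟩
        · by_cases h2 : θ f i = BB.zero
          · rw [if_neg h1, if_pos h2] at hzi
            exact Or.inr ⟨hzi, h2⟩
          · rw [if_neg h1, if_neg h2] at hzi
            exact absurd hzi (by simp [optSide])
      have : f z.val = false := (hconfiff z.val).2 ⟨i, hconf⟩
      have hzW' : z.val ∈ W' := (hfzero z.val z.2).1 this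
      obtain ⟨w, hw, hww⟩ := hzW'
      rwa [← Subtype.ext hww]
    · intro z hz
      have hzW' : z.val ∈ W' := ⟨z, hz, rfl⟩
      have : f z.val = false := (hfzero z.val z.2).2 hzW'
      obtain ⟨i, hconf⟩ := (hconfiff z.val).1 this
      refine ⟨i, Finset.mem_univ i, ?_⟩
      rw [hθsi i]
      rcases hconf with ⟨h1, h2⟩ | ⟨h1, h2⟩
      · rw [if_pos h2]
        exact h1
      · rw [if_neg (by rw [h2]; intro hc; exact BB.noConfusion hc), if_pos h2]
        exact h1
  have hcardα : Fintype.card {z : Fin q // z ≠ x₀} = q - 1 := by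
    have h1 : Fintype.card {z : Fin q // z ≠ x₀}
        = (Finset.univ.filter (fun z : Fin q => z ≠ x₀)).card := Fintype.card_subtype _
    have h2 : Finset.univ.filter (fun z : Fin q => z ≠ x₀) = Finset.univ.erase x₀ := by
      ext z; simp [Finset.mem_erase]
    rw [h1, h2, Finset.card_erase_of_mem (Finset.mem_univ x₀), Finset.card_univ, Fintype.card_fin]
  have := star (q - 1) {z : Fin q // z ≠ x₀} (Fin n) Finset.univ a b hdisj hfull hcardα
  rw [Finset.card_univ, Fintype.card_fin] at this
  omega

end StarStarAux

theorem Fset_minus_g_implementable_starStar (q n : ℕ) (hq : 2 ≤ q) (hn : 1 ≤ n)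
    (g : Fin q → Bool) (hgE : g ∉ Eset q) (hg1 : g ≠ fun _ => true) :
    Implementable Bstar Bstar n q ({g}ᶜ) ↔ q ≤ n + 1 := by
  constructor
  · intro h
    exact forward hq g h
  · intro hqn
    exact backward hq hqn g hgE hg1
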